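/- arXiv:1103.5906 — 6 statements merged into one kernel-verified Lean document; each statement's English description precedes it below -/
import Mathlib

section
/- Let K = ℚ(√−7). On the elliptic curve over K defined by y² + ((85 + 33√−7)/128)·x·y + ((85√−7 − 999)/16384)·y = x³ + ((89√−7 − 275)/4096)·x², the point (0, 0) is a torsion point of order 11. -/
/-!
Let `P = (0, 0)`. The chord-and-tangent formulas give `2P`, `3P = 2P + P`, `5P = 3P + 2P` and
`6P = 5P + P` explicitly; `6P` has the same `x`-coordinate as `5P` and is its reflection, so
`11P = 0`, and `P ≠ 0` has prime order `11`. Each denominator met on the way has the form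
`a + b√-7`, which is nonzero because its norm `a² + 7b²` is.
-/

namespace WeierstrassCurve.Affine.Point

variable {F : Type*} [Field F] [DecidableEq F] {W : WeierstrassCurve.Affine F}
  {x₁ x₂ y₁ y₂ ℓ x₃ y₃ : F}

theorem exists_some_add_some_of_X_ne {h₁ : W.Nonsingular x₁ y₁} {h₂ : W.Nonsingular x₂ y₂}
    (hx : x₁ ≠ x₂) (hℓ : ℓ * (x₁ - x₂) = y₁ - y₂) (hx₃ : W.addX x₁ x₂ ℓ = x₃)
    (hy₃ : W.addY x₁ x₂ y₁ ℓ = y₃) :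
    ∃ h₃ : W.Nonsingular x₃ y₃, some _ _ h₁ + some _ _ h₂ = some _ _ h₃ := by
  have hslope : W.slope x₁ x₂ y₁ y₂ = ℓ := by
    rw [slope_of_X_ne hx, div_eq_iff (sub_ne_zero.mpr hx), hℓ]
  subst hx₃ hy₃ hslope
  exact ⟨_, add_of_X_ne hx⟩

theorem exists_some_add_self_of_Y_ne {h₁ : W.Nonsingular x₁ y₁} (hy : y₁ ≠ W.negY x₁ y₁)
    (hℓ : ℓ * (y₁ - W.negY x₁ y₁) = 3 * x₁ ^ 2 + 2 * W.a₂ * x₁ + W.a₄ - W.a₁ * y₁)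
    (hx₃ : W.addX x₁ x₁ ℓ = x₃) (hy₃ : W.addY x₁ x₁ y₁ ℓ = y₃) :
    ∃ h₃ : W.Nonsingular x₃ y₃, some _ _ h₁ + some _ _ h₁ = some _ _ h₃ := by
  have hslope : W.slope x₁ x₁ y₁ y₁ = ℓ := by
    rw [slope_of_Y_ne rfl hy, div_eq_iff (sub_ne_zero.mpr hy), hℓ]
  subst hx₃ hy₃ hslope
  exact ⟨_, add_self_of_Y_ne hy⟩

end WeierstrassCurve.Affine.Point

theorem add_mul_ne_zero_of_sq_eq_neg {R : Type*} [CommRing R] {s d a b : R} (hs : s ^ 2 = -d)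
    (hab : a ^ 2 + d * b ^ 2 ≠ 0) : a + b * s ≠ 0 := fun h ↦
  hab (by linear_combination (a - b * s) * h + b ^ 2 * hs)

namespace QSqrtNegSeven

open WeierstrassCurve.Affine Point

variable {K : Type*} [Field K] [CharZero K] {s : K}

abbrev curve (s : K) : WeierstrassCurve.Affine K :=
  ⟨(85 + 33 * s) / 128, (89 * s - 275) / 4096, (85 * s - 999) / 16384, 0, 0⟩

theorem nonsingular_zero (hs : s ^ 2 = -7) : (curve s).Nonsingular 0 0 := by
  rw [nonsingular_iff, equation_iff]
  refine ⟨by ring, Or.inr fun h ↦ add_mul_ne_zero_of_sq_eq_neg hs (a := -999) (b := 85)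
    (by norm_num) ?_⟩
  linear_combination (16384 : K) * h

variable [DecidableEq K]

theorem exists_P_add_P (hs : s ^ 2 = -7) (h₁ : (curve s).Nonsingular 0 0) :
    ∃ h₂ : (curve s).Nonsingular ((275 - 89 * s) / 4096) ((-5983 - 2115 * s) / 262144),
      some _ _ h₁ + some _ _ h₁ = some _ _ h₂ := by
  refine exists_some_add_self_of_Y_ne (ℓ := 0) (fun h ↦ ?_) (by ring) ?_ ?_
  · refine add_mul_ne_zero_of_sq_eq_neg hs (a := -999) (b := 85) (by norm_num) ?_
    simp only [negY] at h
    linear_combination (16384 : K) * h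
  · simp only [addX]
    ring
  · simp only [addY, negAddY, addX, negY]
    linear_combination (2937 / 524288 : K) * hs

theorem exists_P2_add_P (hs : s ^ 2 = -7)
    (h₂ : (curve s).Nonsingular ((275 - 89 * s) / 4096) ((-5983 - 2115 * s) / 262144))
    (h₁ : (curve s).Nonsingular 0 0) :
    ∃ h₃ : (curve s).Nonsingular ((47 - 45 * s) / 512) ((-1201 + 627 * s) / 16384),
      some _ _ h₂ + some _ _ h₁ = some _ _ h₃ := by
  refine exists_some_add_some_of_X_ne (ℓ := (-5 - 17 * s) / 128) (fun h ↦ ?_) ?_ ?_ ?_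
  · refine add_mul_ne_zero_of_sq_eq_neg hs (a := 275) (b := -89) (by norm_num) ?_
    linear_combination (4096 : K) * h
  · linear_combination (1513 / 524288 : K) * hs
  · simp only [addX]
    linear_combination (-17 / 1024 : K) * hs
  · simp only [addY, negAddY, addX, negY]
    linear_combination ((12713 / 524288 : K) + (17 / 8192 : K) * s) * hs

theorem exists_P3_add_P2 (hs : s ^ 2 = -7)
    (h₃ : (curve s).Nonsingular ((47 - 45 * s) / 512) ((-1201 + 627 * s) / 16384))
    (h₂ : (curve s).Nonsingular ((275 - 89 * s) / 4096) ((-5983 - 2115 * s) / 262144)) :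
    ∃ h₅ : (curve s).Nonsingular ((47 - 45 * s) / 1024) ((-999 + 85 * s) / 32768),
      some _ _ h₃ + some _ _ h₂ = some _ _ h₅ := by
  refine exists_some_add_some_of_X_ne (ℓ := (-93 - 9 * s) / 128) (fun h ↦ ?_) ?_ ?_ ?_
  · refine add_mul_ne_zero_of_sq_eq_neg hs (a := 101) (b := -271) (by norm_num) ?_
    linear_combination (4096 : K) * h
  · linear_combination (2439 / 524288 : K) * hs
  · simp only [addX]
    linear_combination (-27 / 2048 : K) * hs
  · simp only [addY, negAddY, addX, negY]
    linear_combination ((891 / 65536 : K) + (81 / 32768 : K) * s) * hs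

theorem exists_P5_add_P (hs : s ^ 2 = -7)
    (h₅ : (curve s).Nonsingular ((47 - 45 * s) / 1024) ((-999 + 85 * s) / 32768))
    (h₁ : (curve s).Nonsingular 0 0) :
    ∃ h₆ : (curve s).Nonsingular ((47 - 45 * s) / 1024) ((-1201 + 627 * s) / 65536),
      some _ _ h₅ + some _ _ h₁ = some _ _ h₆ := by
  refine exists_some_add_some_of_X_ne (ℓ := (-9 - 5 * s) / 64) (fun h ↦ ?_) ?_ ?_ ?_
  · refine add_mul_ne_zero_of_sq_eq_neg hs (a := 47) (b := -45) (by norm_num) ?_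
    linear_combination (1024 : K) * h
  · linear_combination (225 / 65536 : K) * hs
  · simp only [addX]
    linear_combination (-115 / 8192 : K) * hs
  · simp only [addY, negAddY, addX, negY]
    linear_combination ((19585 / 1048576 : K) + (2645 / 1048576 : K) * s) * hs

theorem P5_add_P6_eq_zero (hs : s ^ 2 = -7)
    (h₅ : (curve s).Nonsingular ((47 - 45 * s) / 1024) ((-999 + 85 * s) / 32768))
    (h₆ : (curve s).Nonsingular ((47 - 45 * s) / 1024) ((-1201 + 627 * s) / 65536)) :
    some _ _ h₅ + some _ _ h₆ = 0 :=
  add_of_Y_eq rfl (by simp only [negY]; linear_combination (-1485 / 131072 : K) * hs)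

end QSqrtNegSeven

open WeierstrassCurve.Affine QSqrtNegSeven

open Classical in
theorem stmt_3_general {K : Type*} [Field K] [Algebra ℚ K] (s : K) (hs : s ^ 2 = -7) :
    ∃ h : WeierstrassCurve.Affine.Nonsingular (⟨(85 + 33 * s) / 128, (89 * s - 275) / 4096, (85 * s - 999) / 16384, 0, 0⟩ : WeierstrassCurve.Affine K) (0) (0),
      addOrderOf (WeierstrassCurve.Affine.Point.some _ _ h) = 11 := by
  have : CharZero K := charZero_of_injective_algebraMap (algebraMap ℚ K).injective
  have h₁ := nonsingular_zero hs
  obtain ⟨h₂, e₂⟩ := exists_P_add_P hs h₁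
  obtain ⟨h₃, e₃⟩ := exists_P2_add_P hs h₂ h₁
  obtain ⟨h₅, e₅⟩ := exists_P3_add_P2 hs h₃ h₂
  obtain ⟨h₆, e₆⟩ := exists_P5_add_P hs h₅ h₁
  refine ⟨h₁, addOrderOf_eq_prime (hp := ⟨by norm_num⟩) ?_ (Point.some_ne_zero h₁)⟩
  set P := Point.some _ _ h₁
  calc 11 • P = P + P + P + (P + P) + (P + P + P + (P + P) + P) := by abel
    _ = 0 := by rw [e₂, e₃, e₅, e₆, P5_add_P6_eq_zero hs h₅ h₆]

open Classical in
/-- K = ℚ(√(-7)); the given point is a torsion point of order 11. -/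
theorem stmt_3 {K : Type*} [Field K] [Algebra ℚ K] (s : K) (hs : s ^ 2 = -7)
    (hK : ∀ x : K, ∃ a b : ℚ, x = algebraMap ℚ K a + algebraMap ℚ K b * s) :
    ∃ h : WeierstrassCurve.Affine.Nonsingular (⟨(85 + 33 * s) / 128, (89 * s - 275) / 4096, (85 * s - 999) / 16384, 0, 0⟩ : WeierstrassCurve.Affine K) (0) (0),
      addOrderOf (WeierstrassCurve.Affine.Point.some _ _ h) = 11 :=
  stmt_3_general s hs
end

section
/- Let K = ℚ(√17). On the elliptic curve over K defined by y² = x³ − (4323 + 1048√17)x + 227630 + 55208√17, the point (−49 − 12√17, −296 − 72√17) is a torsion point of order 13. -/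
open WeierstrassCurve Polynomial

private lemma some_eq_some' {F : Type*} [Field F] {W : WeierstrassCurve.Affine F}
    {x₁ y₁ x₂ y₂ : F} {h₁ : W.Nonsingular x₁ y₁} (hx : x₁ = x₂) (hy : y₁ = y₂)
    (h₂ : W.Nonsingular x₂ y₂) :
    WeierstrassCurve.Affine.Point.some _ _ h₁ = WeierstrassCurve.Affine.Point.some _ _ h₂ := by
  subst hx; subst hy; rfl

open Classical in
/-- K = ℚ(√(17)); the given point is a torsion point of order 13. -/
theorem stmt_4 {K : Type*} [Field K] [Algebra ℚ K] (s : K) (hs : s ^ 2 = 17)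
    (hK : ∀ x : K, ∃ a b : ℚ, x = algebraMap ℚ K a + algebraMap ℚ K b * s) :
    ∃ h : WeierstrassCurve.Affine.Nonsingular (⟨0, 0, 0, -(4323 + 1048 * s), 227630 + 55208 * s⟩ : WeierstrassCurve.Affine K) (-49 - 12 * s) (-296 - 72 * s),
      addOrderOf (WeierstrassCurve.Affine.Point.some _ _ h) = 13 := by
  clear hK
  haveI : CharZero K := charZero_of_injective_algebraMap (algebraMap ℚ K).injective
  set W : WeierstrassCurve.Affine K := ⟨0, 0, 0, -(4323 + 1048 * s), 227630 + 55208 * s⟩ with hW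
  have sq17 : ∀ q : ℚ, q ^ 2 ≠ 17 := by
    intro q h
    have h1 : Irrational (Real.sqrt 17) := by
      have := Nat.Prime.irrational_sqrt (p := 17) (by norm_num)
      simpa using this
    apply h1
    refine ⟨|q|, ?_⟩
    have h2 : ((q : ℝ)) ^ 2 = 17 := by exact_mod_cast congrArg (Rat.cast (K := ℝ)) h
    rw [show ((17 : ℝ)) = ((q : ℝ)) ^ 2 from h2.symm, Real.sqrt_sq_eq_abs]
    push_cast
    rfl
  have key : ∀ a b : ℚ, b ≠ 0 → (a : K) + (b : K) * s ≠ 0 := by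
    intro a b hb h
    have h2 : ((a ^ 2 - 17 * b ^ 2 : ℚ) : K) = 0 := by
      push_cast
      linear_combination ((a : K) - (b : K) * s) * h + ((b : K)) ^ 2 * hs
    have h3 : (a ^ 2 - 17 * b ^ 2 : ℚ) = 0 := by exact_mod_cast h2
    exact sq17 (a / b) (by field_simp; linarith)
  -- Nonsingularity of the five points
  have hP : W.Nonsingular (-49 - 12 * s) (-296 - 72 * s) := by
    rw [Affine.nonsingular_iff, Affine.equation_iff]
    refine ⟨?_, Or.inr ?_⟩ <;> simp only [hW]
    · linear_combination (13776 + 1728 * s) * hs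
    · intro h; exact key 592 144 (by norm_num) (by push_cast; linear_combination -h)
  have hP2 : W.Nonsingular (247 + 60 * s) (5408 + 1312 * s) := by
    rw [Affine.nonsingular_iff, Affine.equation_iff]
    refine ⟨?_, Or.inr ?_⟩ <;> simp only [hW]
    · linear_combination (-883376 - 216000 * s) * hs
    · intro h; exact key 10816 2624 (by norm_num) (by push_cast; linear_combination h)
  have hP3 : W.Nonsingular (-9 - 4 * s) (-416 - 96 * s) := by
    rw [Affine.nonsingular_iff, Affine.equation_iff]
    refine ⟨?_, Or.inr ?_⟩ <;> simp only [hW]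
    · linear_combination (5456 + 64 * s) * hs
    · intro h; exact key 832 192 (by norm_num) (by push_cast; linear_combination -h)
  have hP6 : W.Nonsingular (35 + 8 * s) (212 + 52 * s) := by
    rw [Affine.nonsingular_iff, Affine.equation_iff]
    refine ⟨?_, Or.inr ?_⟩ <;> simp only [hW]
    · linear_combination (4368 - 512 * s) * hs
    · intro h; exact key 424 104 (by norm_num) (by push_cast; linear_combination h)
  have hP7 : W.Nonsingular (35 + 8 * s) (-212 - 52 * s) := by
    rw [Affine.nonsingular_iff, Affine.equation_iff]
    refine ⟨?_, Or.inr ?_⟩ <;> simp only [hW]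
    · linear_combination (4368 - 512 * s) * hs
    · intro h; exact key 424 104 (by norm_num) (by push_cast; linear_combination -h)
  -- Doubling P
  have hyP : (-296 - 72 * s : K) ≠ W.negY (-49 - 12 * s) (-296 - 72 * s) := by
    simp only [hW, Affine.negY]
    intro h; exact key 592 144 (by norm_num) (by push_cast; linear_combination -h)
  have hL2 : W.slope (-49 - 12 * s) (-49 - 12 * s) (-296 - 72 * s) (-296 - 72 * s)
      = -9 - 2 * s := by
    have hden : (-296 - 72 * s : K) - (-(-296 - 72 * s) - 0 * (-49 - 12 * s) - 0) ≠ 0 := by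
      intro h; exact key (-592) (-144) (by norm_num) (by push_cast; linear_combination h)
    rw [Affine.slope_of_Y_ne rfl hyP]
    simp only [hW, Affine.negY]
    rw [div_eq_iff hden]
    linear_combination 144 * hs
  have hX2 : W.addX (-49 - 12 * s) (-49 - 12 * s)
      (W.slope (-49 - 12 * s) (-49 - 12 * s) (-296 - 72 * s) (-296 - 72 * s))
      = 247 + 60 * s := by
    rw [hL2]; simp only [hW, Affine.addX]; linear_combination 4 * hs
  have hY2 : W.addY (-49 - 12 * s) (-49 - 12 * s) (-296 - 72 * s)
      (W.slope (-49 - 12 * s) (-49 - 12 * s) (-296 - 72 * s) (-296 - 72 * s))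
      = 5408 + 1312 * s := by
    rw [hL2]; simp only [hW, Affine.addY, Affine.negAddY, Affine.addX, Affine.negY]
    linear_combination (180 + 8 * s) * hs
  have h2 : Affine.Point.some _ _ hP + Affine.Point.some _ _ hP = Affine.Point.some _ _ hP2 := by
    rw [Affine.Point.add_self_of_Y_ne hyP]
    exact some_eq_some' hX2 hY2 hP2
  -- P3 = P2 + P
  have hx23 : (247 + 60 * s : K) ≠ -49 - 12 * s := by
    intro h; exact key 296 72 (by norm_num) (by push_cast; linear_combination h)
  have hL3 : W.slope (247 + 60 * s) (-49 - 12 * s) (5408 + 1312 * s) (-296 - 72 * s)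
      = 11 + 2 * s := by
    rw [Affine.slope_of_X_ne hx23, div_eq_iff (sub_ne_zero.mpr hx23)]
    linear_combination (-144) * hs
  have hX3 : W.addX (247 + 60 * s) (-49 - 12 * s)
      (W.slope (247 + 60 * s) (-49 - 12 * s) (5408 + 1312 * s) (-296 - 72 * s))
      = -9 - 4 * s := by
    rw [hL3]; simp only [hW, Affine.addX]; linear_combination 4 * hs
  have hY3 : W.addY (247 + 60 * s) (-49 - 12 * s) (5408 + 1312 * s)
      (W.slope (247 + 60 * s) (-49 - 12 * s) (5408 + 1312 * s) (-296 - 72 * s))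
      = -416 - 96 * s := by
    rw [hL3]; simp only [hW, Affine.addY, Affine.negAddY, Affine.addX, Affine.negY]
    linear_combination (84 - 8 * s) * hs
  have h3 : Affine.Point.some _ _ hP2 + Affine.Point.some _ _ hP = Affine.Point.some _ _ hP3 := by
    rw [Affine.Point.add_of_X_ne hx23]
    exact some_eq_some' hX3 hY3 hP3
  -- Doubling P3
  have hyP3 : (-416 - 96 * s : K) ≠ W.negY (-9 - 4 * s) (-416 - 96 * s) := by
    simp only [hW, Affine.negY]
    intro h; exact key 832 192 (by norm_num) (by push_cast; linear_combination -h)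
  have hL6 : W.slope (-9 - 4 * s) (-9 - 4 * s) (-416 - 96 * s) (-416 - 96 * s) = s := by
    have hden : (-416 - 96 * s : K) - (-(-416 - 96 * s) - 0 * (-9 - 4 * s) - 0) ≠ 0 := by
      intro h; exact key (-832) (-192) (by norm_num) (by push_cast; linear_combination h)
    rw [Affine.slope_of_Y_ne rfl hyP3]
    simp only [hW, Affine.negY]
    rw [div_eq_iff hden]
    linear_combination 240 * hs
  have hX6 : W.addX (-9 - 4 * s) (-9 - 4 * s)
      (W.slope (-9 - 4 * s) (-9 - 4 * s) (-416 - 96 * s) (-416 - 96 * s))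
      = 35 + 8 * s := by
    rw [hL6]; simp only [hW, Affine.addX]; linear_combination hs
  have hY6 : W.addY (-9 - 4 * s) (-9 - 4 * s) (-416 - 96 * s)
      (W.slope (-9 - 4 * s) (-9 - 4 * s) (-416 - 96 * s) (-416 - 96 * s))
      = 212 + 52 * s := by
    rw [hL6]; simp only [hW, Affine.addY, Affine.negAddY, Affine.addX, Affine.negY]
    linear_combination (-12 - s) * hs
  have h6 : Affine.Point.some _ _ hP3 + Affine.Point.some _ _ hP3 = Affine.Point.some _ _ hP6 := by
    rw [Affine.Point.add_self_of_Y_ne hyP3]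
    exact some_eq_some' hX6 hY6 hP6
  -- P7 = P6 + P
  have hx67 : (35 + 8 * s : K) ≠ -49 - 12 * s := by
    intro h; exact key 84 20 (by norm_num) (by push_cast; linear_combination h)
  have hL7 : W.slope (35 + 8 * s) (-49 - 12 * s) (212 + 52 * s) (-296 - 72 * s)
      = 2 + s := by
    rw [Affine.slope_of_X_ne hx67, div_eq_iff (sub_ne_zero.mpr hx67)]
    linear_combination (-20) * hs
  have hX7 : W.addX (35 + 8 * s) (-49 - 12 * s)
      (W.slope (35 + 8 * s) (-49 - 12 * s) (212 + 52 * s) (-296 - 72 * s))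
      = 35 + 8 * s := by
    rw [hL7]; simp only [hW, Affine.addX]; linear_combination hs
  have hY7 : W.addY (35 + 8 * s) (-49 - 12 * s) (212 + 52 * s)
      (W.slope (35 + 8 * s) (-49 - 12 * s) (212 + 52 * s) (-296 - 72 * s))
      = -212 - 52 * s := by
    rw [hL7]; simp only [hW, Affine.addY, Affine.negAddY, Affine.addX, Affine.negY]
    linear_combination (-2 - s) * hs
  have h7 : Affine.Point.some _ _ hP6 + Affine.Point.some _ _ hP = Affine.Point.some _ _ hP7 := by
    rw [Affine.Point.add_of_X_ne hx67]
    exact some_eq_some' hX7 hY7 hP7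
  -- 6P + 7P = 0
  have hz : Affine.Point.some _ _ hP6 + Affine.Point.some _ _ hP7 = 0 := by
    apply Affine.Point.add_of_Y_eq rfl
    simp only [hW, Affine.negY]
    ring
  -- Assemble
  have e2 : 2 • Affine.Point.some _ _ hP = Affine.Point.some _ _ hP2 := by
    rw [two_nsmul]; exact h2
  have e3 : 3 • Affine.Point.some _ _ hP = Affine.Point.some _ _ hP3 := by
    show (2 + 1 : ℕ) • Affine.Point.some _ _ hP = Affine.Point.some _ _ hP3
    rw [add_nsmul, e2, one_nsmul]; exact h3
  have e6 : 6 • Affine.Point.some _ _ hP = Affine.Point.some _ _ hP6 := by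
    show (3 + 3 : ℕ) • Affine.Point.some _ _ hP = Affine.Point.some _ _ hP6
    rw [add_nsmul, e3]; exact h6
  have e7 : 7 • Affine.Point.some _ _ hP = Affine.Point.some _ _ hP7 := by
    show (6 + 1 : ℕ) • Affine.Point.some _ _ hP = Affine.Point.some _ _ hP7
    rw [add_nsmul, e6, one_nsmul]; exact h7
  have e13 : 13 • Affine.Point.some _ _ hP = 0 := by
    show (6 + 7 : ℕ) • Affine.Point.some _ _ hP = 0
    rw [add_nsmul, e6, e7]; exact hz
  haveI : Fact (Nat.Prime 13) := ⟨by norm_num⟩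
  exact ⟨hP, addOrderOf_eq_prime e13 (Affine.Point.some_ne_zero hP)⟩
end

section
/- Let K = ℚ(√−15). On the elliptic curve over K defined by y² = x³ + 272133x + 41173974, the point (3 − 144√−15, −6480 − 432√−15) is a torsion point of order 16. -/
/-! Doubling along tangent lines gives 2P = (2163, -103680), 4P = (435, -15552) and
8P = (-141, 0). The last point has y = 0, so it is 2-torsion and P has order exactly 16.
As Δ ≠ 0, every solution of the affine equation is a nonsingular point. -/

open WeierstrassCurve

instance WeierstrassCurve.isShortNF_mk {R : Type*} [CommRing R] (a b : R) :
    (⟨0, 0, 0, a, b⟩ : WeierstrassCurve R).IsShortNF :=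
  ⟨rfl, rfl, rfl⟩

namespace WeierstrassCurve.Affine.Point

variable {F : Type*} [Field F] [DecidableEq F] {W : Affine F}

lemma some_add_self_of_slope {x y x' y' ℓ : F} {h : W.Nonsingular x y}
    {h' : W.Nonsingular x' y'} (hy : y ≠ W.negY x y)
    (hℓ : ℓ * (y - W.negY x y) = 3 * x ^ 2 + 2 * W.a₂ * x + W.a₄ - W.a₁ * y)
    (hx' : W.addX x x ℓ = x') (hy' : W.addY x x y ℓ = y') :
    some _ _ h + some _ _ h = some _ _ h' := by
  have hslope : W.slope x x y y = ℓ := by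
    rw [slope_of_Y_ne rfl hy, div_eq_iff (sub_ne_zero.mpr hy), hℓ]
  rw [add_self_of_Y_ne hy, some.injEq, hslope]
  exact ⟨hx', hy'⟩

lemma some_add_self_of_isShortNF [W.IsShortNF] {x y x' y' ℓ : F} {h : W.Nonsingular x y}
    {h' : W.Nonsingular x' y'} (hy : 2 * y ≠ 0) (hℓ : ℓ * (2 * y) = 3 * x ^ 2 + W.a₄)
    (hx' : ℓ ^ 2 - 2 * x = x') (hy' : ℓ * (x - x') - y = y') :
    some _ _ h + some _ _ h = some _ _ h' := by
  refine some_add_self_of_slope (ℓ := ℓ) ?_ ?_ ?_ ?_ <;>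
    simp only [negY, addY, negAddY, addX, a₁_of_isShortNF, a₂_of_isShortNF, a₃_of_isShortNF]
  · contrapose! hy
    linear_combination hy
  · linear_combination hℓ
  · linear_combination hx'
  · linear_combination hy' - ℓ * hx'

end WeierstrassCurve.Affine.Point

open WeierstrassCurve.Affine WeierstrassCurve.Affine.Point

open Classical in
theorem stmt_7_general {K : Type*} [Field K] [Algebra ℚ K] (s : K) (hs : s ^ 2 = -15) :
    ∃ h : WeierstrassCurve.Affine.Nonsingular (⟨0, 0, 0, 272133, 41173974⟩ : WeierstrassCurve.Affine K) (3 - 144 * s) (-6480 - 432 * s),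
      addOrderOf (WeierstrassCurve.Affine.Point.some _ _ h) = 16 := by
  have : CharZero K := charZero_of_injective_algebraMap (algebraMap ℚ K).injective
  have hW {x y : K} (h : y ^ 2 = x ^ 3 + 272133 * x + 41173974) :
      Affine.Nonsingular (⟨0, 0, 0, 272133, 41173974⟩ : Affine K) x y := by
    refine (equation_iff_nonsingular_of_Δ_ne_zero (by rw [Δ_of_isShortNF]; norm_num)).mp ?_
    rw [equation_iff]
    linear_combination h
  have hy : 2 * (-6480 - 432 * s) ≠ 0 := by
    intro h
    have hs' : s = -15 := by linear_combination -h / 864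
    norm_num [hs'] at hs
  have hP := hW (x := 3 - 144 * s) (y := -6480 - 432 * s) (by linear_combination 2985984 * s * hs)
  have hP₂ := hW (x := 2163) (y := -103680) (by norm_num)
  have hP₄ := hW (x := 435) (y := -15552) (by norm_num)
  have hP₈ := hW (x := -141) (y := 0) (by norm_num)
  have h₂ : 2 • some _ _ hP = some _ _ hP₂ := (two_nsmul _).trans <|
    some_add_self_of_isShortNF (ℓ := 48 - 3 * s) hy (by linear_combination -59616 * hs)
      (by linear_combination 9 * hs) (by linear_combination 432 * hs)
  have h₄ : 2 • some _ _ hP₂ = some _ _ hP₄ := (two_nsmul _).trans <|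
    some_add_self_of_isShortNF (ℓ := -69) (by norm_num) (by norm_num) (by norm_num) (by norm_num)
  have h₈ : 2 • some _ _ hP₄ = some _ _ hP₈ := (two_nsmul _).trans <|
    some_add_self_of_isShortNF (ℓ := -27) (by norm_num) (by norm_num) (by norm_num) (by norm_num)
  have h₁₆ : 2 • some _ _ hP₈ = 0 := (two_nsmul _).trans <| add_self_of_Y_eq (by simp [negY])
  refine ⟨hP, (addOrderOf_eq_prime_pow (p := 2) (n := 3) ?_ ?_).trans (by norm_num)⟩
  · simp only [pow_succ, pow_zero, one_mul, mul_nsmul, h₂, h₄, h₈]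
    exact some_ne_zero hP₈
  · simp only [pow_succ, pow_zero, one_mul, mul_nsmul, h₂, h₄, h₈, h₁₆]

open Classical in
/-- K = ℚ(√(-15)); the given point is a torsion point of order 16. -/
theorem stmt_7 {K : Type*} [Field K] [Algebra ℚ K] (s : K) (hs : s ^ 2 = -15)
    (hK : ∀ x : K, ∃ a b : ℚ, x = algebraMap ℚ K a + algebraMap ℚ K b * s) :
    ∃ h : WeierstrassCurve.Affine.Nonsingular (⟨0, 0, 0, 272133, 41173974⟩ : WeierstrassCurve.Affine K) (3 - 144 * s) (-6480 - 432 * s),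
      addOrderOf (WeierstrassCurve.Affine.Point.some _ _ h) = 16 :=
  stmt_7_general s hs
end

section
/- Let K = ℚ(√−7). On the elliptic curve over K defined by y² + ((14 + 3√−7)/7)xy + ((−3 + √−7)/7)y = x³ + ((−3 + √−7)/7)x², the point (0, 0) is a torsion point of order 14. -/
/-!
Write `P = (0, 0)`. The chord-tangent formulas give `2P`, `3P = 2P + P`, `4P = 2P + 2P` and
`7P = 4P + 3P` explicitly as affine points, and `7P` is its own negative, so `14P = 0` while
`2P ≠ 0` and `7P ≠ 0`. Besides polynomial identities modulo `s ^ 2 = -7`, the only input is that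
`s` is irrational, which keeps `P` nonsingular and every chord and tangent non-vertical.
-/

open WeierstrassCurve

theorem addOrderOf_eq_mul_of_prime {G : Type*} [AddMonoid G] {x : G} {p q : ℕ}
    (hp : p.Prime) (hq : q.Prime) (h : (p * q) • x = 0) (hpx : p • x ≠ 0) (hqx : q • x ≠ 0) :
    addOrderOf x = p * q := by
  refine addOrderOf_eq_of_nsmul_and_div_prime_nsmul (Nat.mul_pos hp.pos hq.pos) h
    fun r hr hrpq => ?_
  rcases (Nat.Prime.dvd_mul hr).mp hrpq with hrp | hrq
  · rwa [(Nat.prime_dvd_prime_iff_eq hr hp).mp hrp, Nat.mul_div_cancel_left _ hp.pos]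
  · rwa [(Nat.prime_dvd_prime_iff_eq hr hq).mp hrq, Nat.mul_div_cancel _ hq.pos]

theorem ratCast_add_mul_ne_zero {K : Type*} [Field K] [CharZero K] {s : K} {d : ℚ}
    (hd : ¬IsSquare d) (hs : s ^ 2 = d) {p q : ℚ} (hq : q ≠ 0) : (p : K) + q * s ≠ 0 := by
  intro h
  have hs' : s = ((-p / q : ℚ) : K) := by
    push_cast
    rw [eq_div_iff (Rat.cast_ne_zero.mpr hq)]
    linear_combination h
  refine hd ⟨-p / q, ?_⟩
  exact_mod_cast (hs' ▸ hs).symm.trans (sq _)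

namespace WeierstrassCurve.Affine.Point

variable {F : Type*} [Field F] [DecidableEq F] {W : Affine F} {x₁ x₂ y₁ y₂ x₃ y₃ ℓ : F}

theorem exists_some_add_some_eq_of_X_ne (h₁ : W.Nonsingular x₁ y₁) (h₂ : W.Nonsingular x₂ y₂)
    (hx : x₁ ≠ x₂) (hℓ : y₁ - y₂ = ℓ * (x₁ - x₂))
    (hx₃ : W.addX x₁ x₂ ℓ = x₃) (hy₃ : W.addY x₁ x₂ y₁ ℓ = y₃) :
    ∃ h₃ : W.Nonsingular x₃ y₃, some _ _ h₁ + some _ _ h₂ = some _ _ h₃ := by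
  rw [← div_eq_iff (sub_ne_zero.mpr hx), ← W.slope_of_X_ne hx] at hℓ
  subst hℓ hx₃ hy₃
  exact ⟨_, add_some fun h => hx h.1⟩

theorem exists_some_add_self_eq_of_Y_ne (h₁ : W.Nonsingular x₁ y₁) (hy : y₁ ≠ W.negY x₁ y₁)
    (hℓ : 3 * x₁ ^ 2 + 2 * W.a₂ * x₁ + W.a₄ - W.a₁ * y₁ = ℓ * (y₁ - W.negY x₁ y₁))
    (hx₃ : W.addX x₁ x₁ ℓ = x₃) (hy₃ : W.addY x₁ x₁ y₁ ℓ = y₃) :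
    ∃ h₃ : W.Nonsingular x₃ y₃, some _ _ h₁ + some _ _ h₁ = some _ _ h₃ := by
  rw [← div_eq_iff (sub_ne_zero.mpr hy), ← W.slope_of_Y_ne rfl hy] at hℓ
  subst hℓ hx₃ hy₃
  exact ⟨_, add_some fun h => hy h.2⟩

end WeierstrassCurve.Affine.Point

def torsion14Curve {K : Type*} [Field K] (s : K) : Affine K :=
  ⟨(14 + 3 * s) / 7, (-3 + s) / 7, (-3 + s) / 7, 0, 0⟩

namespace torsion14Curve

open Affine Point

variable {K : Type*} [Field K] [CharZero K] {s : K}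

theorem ne_of_sub_eq (hs : s ^ 2 = -7) {x y : K} (p q : ℚ) (hq : q ≠ 0)
    (h : x - y = p + q * s) : x ≠ y := by
  have hd : ¬IsSquare (-7 : ℚ) := fun ⟨r, hr⟩ => by nlinarith [mul_self_nonneg r]
  refine sub_ne_zero.mp fun hxy => ratCast_add_mul_ne_zero hd (p := p) ?_ hq (h ▸ hxy)
  push_cast
  exact hs

theorem zero_ne_negY_zero (hs : s ^ 2 = -7) : 0 ≠ (torsion14Curve s).negY 0 0 :=
  ne_of_sub_eq hs (-3 / 7) (1 / 7) (by norm_num)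
    (by simp only [negY, torsion14Curve]; push_cast; ring)

theorem nonsingular_zero (hs : s ^ 2 = -7) : (torsion14Curve s).Nonsingular 0 0 :=
  (nonsingular_iff _ _).mpr
    ⟨by rw [equation_iff]; simp [torsion14Curve], Or.inr (zero_ne_negY_zero hs)⟩

variable [DecidableEq K]

theorem exists_seven_nsmul_eq_some (hs : s ^ 2 = -7) :
    ∃ (x y : K) (h : (torsion14Curve s).Nonsingular x y),
      7 • some _ _ (nonsingular_zero hs) = some _ _ h ∧ (torsion14Curve s).negY x y = y := by
  set P := some _ _ (nonsingular_zero hs)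
  obtain ⟨h₂, e₂⟩ := exists_some_add_self_eq_of_Y_ne (nonsingular_zero hs)
    (x₃ := 3 / 7 - 1 / 7 * s) (y₃ := -6 / 7 - 2 / 49 * s) (ℓ := 0)
    (zero_ne_negY_zero hs)
    (by simp only [negY, torsion14Curve]; ring)
    (by simp only [addX, torsion14Curve]; ring)
    (by simp only [addY, negAddY, addX, negY, torsion14Curve]; linear_combination 3 / 49 * hs)
  obtain ⟨h₃, e₃⟩ := exists_some_add_some_eq_of_X_ne h₂ (nonsingular_zero hs)
    (x₃ := -1 - 3 / 7 * s) (y₃ := 10 / 7 + 2 / 7 * s) (ℓ := -1 - 3 / 7 * s)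
    (ne_of_sub_eq hs (3 / 7) (-1 / 7) (by norm_num) (by push_cast; ring))
    (by linear_combination -3 / 49 * hs)
    (by simp only [addX, torsion14Curve]; ring)
    (by simp only [addY, negAddY, addX, negY, torsion14Curve]; linear_combination 3 / 49 * hs)
  obtain ⟨h₄, e₄⟩ := exists_some_add_self_eq_of_Y_ne h₂
    (x₃ := -1 / 7 - 1 / 7 * s) (y₃ := 4 / 49 * s) (ℓ := -2 - 2 / 7 * s)
    (ne_of_sub_eq hs (-6 / 7) (-2 / 49) (by norm_num)
      (by simp only [negY, torsion14Curve]; push_cast; linear_combination -3 / 49 * hs))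
    (by simp only [negY, torsion14Curve]; linear_combination (-33 / 343 - 6 / 343 * s) * hs)
    (by simp only [addX, torsion14Curve]; linear_combination -2 / 49 * hs)
    (by simp only [addY, negAddY, addX, negY, torsion14Curve]
        linear_combination (3 / 49 + 2 / 343 * s) * hs)
  obtain ⟨h₇, e₇⟩ := exists_some_add_some_eq_of_X_ne h₄ h₃
    (x₃ := -1 / 8 - 11 / 56 * s) (y₃ := 5 / 112 + 17 / 112 * s) (ℓ := -5 / 4 + 5 / 28 * s)
    (ne_of_sub_eq hs (6 / 7) (2 / 7) (by norm_num) (by push_cast; ring))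
    (by linear_combination -5 / 98 * hs)
    (by simp only [addX, torsion14Curve]; linear_combination 85 / 784 * hs)
    (by simp only [addY, negAddY, addX, negY, torsion14Curve]
        linear_combination (39 / 3136 - 1445 / 21952 * s) * hs)
  refine ⟨_, _, h₇, ?_, by simp only [negY, torsion14Curve]; linear_combination 33 / 392 * hs⟩
  change (2 + 2 + (2 + 1)) • P = _
  rw [add_nsmul, add_nsmul, add_nsmul, one_nsmul, two_nsmul, e₂, e₄, e₃, e₇]

theorem two_nsmul_ne_zero (hs : s ^ 2 = -7) : 2 • some _ _ (nonsingular_zero hs) ≠ 0 := by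
  rw [two_nsmul, add_of_Y_ne (zero_ne_negY_zero hs)]
  exact some_ne_zero _

theorem addOrderOf_some_zero_zero (hs : s ^ 2 = -7) :
    addOrderOf (some _ _ (nonsingular_zero hs)) = 14 := by
  obtain ⟨x, y, h, h₇, hy⟩ := exists_seven_nsmul_eq_some hs
  refine addOrderOf_eq_mul_of_prime (p := 2) (q := 7) Nat.prime_two (by norm_num) ?_
    (two_nsmul_ne_zero hs) (h₇ ▸ some_ne_zero h)
  rw [mul_comm, mul_nsmul, h₇, two_nsmul]
  exact add_of_Y_eq rfl hy.symm

end torsion14Curve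

open Classical in
theorem stmt_10_general {K : Type*} [Field K] [Algebra ℚ K] (s : K) (hs : s ^ 2 = -7) :
    ∃ h : WeierstrassCurve.Affine.Nonsingular (⟨(14 + 3 * s) / 7, (-3 + s) / 7, (-3 + s) / 7, 0, 0⟩ : WeierstrassCurve.Affine K) (0) (0),
      addOrderOf (WeierstrassCurve.Affine.Point.some _ _ h) = 14 := by
  have : CharZero K := charZero_of_injective_algebraMap (algebraMap ℚ K).injective
  exact ⟨torsion14Curve.nonsingular_zero hs, torsion14Curve.addOrderOf_some_zero_zero hs⟩

open Classical in
/-- K = ℚ(√(-7)); the given point is a torsion point of order 14. -/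
theorem stmt_10 {K : Type*} [Field K] [Algebra ℚ K] (s : K) (hs : s ^ 2 = -7)
    (hK : ∀ x : K, ∃ a b : ℚ, x = algebraMap ℚ K a + algebraMap ℚ K b * s) :
    ∃ h : WeierstrassCurve.Affine.Nonsingular (⟨(14 + 3 * s) / 7, (-3 + s) / 7, (-3 + s) / 7, 0, 0⟩ : WeierstrassCurve.Affine K) (0) (0),
      addOrderOf (WeierstrassCurve.Affine.Point.some _ _ h) = 14 :=
  stmt_10_general s hs
end

section
/- Every rational torsion point of the elliptic curve y² + xy + y = x³ + x² over ℚ has x-coordinate 0 or −1, and the rational torsion subgroup is cyclic of order 4. -/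
open WeierstrassCurve Polynomial

/-- The modular curve X₁(15): y² + xy + y = x³ + x² over ℚ. -/
def X115 : WeierstrassCurve.Affine ℚ := ⟨1, 1, 1, 0, 0⟩

/-!
If `x = a / b` in lowest terms, then `x(2P) = φ₂(x) / ψ₂²(x)` is the quotient of two binary
quartic forms in `a, b` whose resultant is `15`, so the fraction cancels by at most `15`, and the
naive height satisfies `H(x(2P)) ≥ H(x)⁴ / 144`. Once `H(x) ≥ 6` the heights of `P, 2P, 4P, …`
therefore increase strictly, which is impossible for a torsion point since it has finitely many
multiples. The remaining candidates `x = a / b` with `|a|, b ≤ 5` are checked directly: on the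
curve `ψ₂²(x) = (2y + x + 1)²`, and this is a rational square only for `x = 0, -1`. These give
`P = (0, 0)`, `2P = (-1, 0)`, `3P = (0, -1)`, and `4P = 0`.
-/

open WeierstrassCurve.Affine Height

section

variable {α : Type*} [CommRing α] [LinearOrder α] [IsStrictOrderedRing α]

lemma abs_cubic_form_le (c₀ c₁ c₂ c₃ a b : α) :
    |c₀ * a ^ 3 + c₁ * a ^ 2 * b + c₂ * a * b ^ 2 + c₃ * b ^ 3| ≤
      (|c₀| + |c₁| + |c₂| + |c₃|) * max |a| |b| ^ 3 := by
  have ha := le_max_left |a| |b|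
  have hb := le_max_right |a| |b|
  calc _ ≤ |c₀ * a ^ 3| + |c₁ * a ^ 2 * b| + |c₂ * a * b ^ 2| + |c₃ * b ^ 3| :=
        (abs_add_le _ _).trans (add_le_add (abs_add_three _ _ _) le_rfl)
    _ = |c₀| * |a| ^ 3 + |c₁| * |a| ^ 2 * |b| + |c₂| * |a| * |b| ^ 2 + |c₃| * |b| ^ 3 := by
        simp only [abs_mul, abs_pow]
    _ ≤ |c₀| * max |a| |b| ^ 3 + |c₁| * max |a| |b| ^ 2 * max |a| |b|
          + |c₂| * max |a| |b| * max |a| |b| ^ 2 + |c₃| * max |a| |b| ^ 3 := by gcongr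
    _ = _ := by ring

lemma abs_mul_add_mul_le (u v A B : α) : |u * A + v * B| ≤ (|u| + |v|) * max |A| |B| := by
  calc _ ≤ |u| * |A| + |v| * |B| := by simpa only [abs_mul] using abs_add_le (u * A) (v * B)
    _ ≤ |u| * max |A| |B| + |v| * max |A| |B| := by gcongr <;> simp
    _ = _ := by ring

end

lemma Rat.mulHeight₁_eq_max_abs (q : ℚ) :
    mulHeight₁ q = ((max |q.num| |(q.den : ℤ)| : ℤ) : ℝ) := by
  rw [Rat.mulHeight₁_eq_max]; push_cast; simp

noncomputable def WeierstrassCurve.Affine.Point.naiveHeight {W : WeierstrassCurve.Affine ℚ} :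
    W.Point → ℝ
  | .zero => 1
  | .some x _ _ => mulHeight₁ x

namespace X115

lemma equation_iff_eq (x y : ℚ) : X115.Equation x y ↔ y ^ 2 + x * y + y = x ^ 3 + x ^ 2 := by
  rw [equation_iff]
  simp only [X115]
  constructor <;> intro h <;> linear_combination h

lemma negY_eq (x y : ℚ) : X115.negY x y = -y - x - 1 := by
  simp [negY, X115]

lemma eval_Ψ₂Sq (x : ℚ) : X115.Ψ₂Sq.eval x = 4 * x ^ 3 + 5 * x ^ 2 + 2 * x + 1 := by
  norm_num [Ψ₂Sq, b₂, b₄, b₆, X115]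

lemma eval_Φ_two (x : ℚ) : (X115.Φ 2).eval x = x ^ 4 - x ^ 2 - 2 * x - 1 := by
  simp [Φ_two, b₄, b₆, b₈, X115]

lemma eval_Ψ₂Sq_eq_sq {x y : ℚ} (h : X115.Equation x y) :
    X115.Ψ₂Sq.eval x = (2 * y + x + 1) ^ 2 := by
  rw [eval_Ψ₂Sq]; linear_combination -4 * (equation_iff_eq x y).1 h

lemma eval_Ψ₂Sq_ne_zero {x : ℚ} (hx : x ≠ -1) : X115.Ψ₂Sq.eval x ≠ 0 := by
  have hquad : 0 < 4 * x ^ 2 + x + 1 := by nlinarith [sq_nonneg (8 * x + 1)]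
  rw [eval_Ψ₂Sq, show 4 * x ^ 3 + 5 * x ^ 2 + 2 * x + 1 = (x + 1) * (4 * x ^ 2 + x + 1) by ring]
  exact mul_ne_zero (by contrapose! hx; linarith) hquad.ne'

lemma exists_two_nsmul_some_eq {x y : ℚ} (h : X115.Nonsingular x y) (hx : x ≠ -1) :
    ∃ x' y' h', 2 • Point.some x y h = Point.some x' y' h' ∧
      X115.Ψ₂Sq.eval x * x' = (X115.Φ 2).eval x := by
  have hD : 2 * y + x + 1 ≠ 0 := by
    have := eval_Ψ₂Sq_ne_zero hx
    rw [eval_Ψ₂Sq_eq_sq h.1] at this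
    exact pow_ne_zero_iff two_ne_zero |>.1 this
  have hy : y ≠ X115.negY x y := by rw [negY_eq]; contrapose! hD; linarith
  refine ⟨_, _, _, by rw [two_nsmul, Point.add_self_of_Y_ne hy], ?_⟩
  rw [eval_Ψ₂Sq_eq_sq h.1, slope_of_Y_ne rfl hy, addX, negY_eq, eval_Φ_two]
  simp only [X115]
  rw [show y - (-y - x - 1) = 2 * y + x + 1 by ring]
  field_simp
  linear_combination (-8 * x - 5) * (equation_iff_eq x y).1 h.1

-- The homogenisations `b⁴ φ₂(a / b)` and `b⁴ ψ₂²(a / b)`.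
def doublingNum (a b : ℤ) : ℤ := a ^ 4 - a ^ 2 * b ^ 2 - 2 * a * b ^ 3 - b ^ 4

def doublingDen (a b : ℤ) : ℤ := 4 * a ^ 3 * b + 5 * a ^ 2 * b ^ 2 + 2 * a * b ^ 3 + b ^ 4

-- Bézout cofactors for the resultant `15`; the sums of the absolute values of their
-- coefficients, `95 + 49 = 144` and `23 + 9`, give the constant in `fifteen_mul_pow_seven_le`.
lemma doubling_bezout (a b : ℤ) :
    (48 * a ^ 2 * b + 40 * a * b ^ 2 + 7 * b ^ 3) * doublingNum a b
        + (-12 * a ^ 3 + 5 * a ^ 2 * b + 10 * a * b ^ 2 + 22 * b ^ 3) * doublingDen a b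
      = 15 * b ^ 7 ∧
    (15 * a ^ 3 + 4 * a ^ 2 * b + 4 * a * b ^ 2) * doublingNum a b
        + (-a ^ 3 + 4 * a ^ 2 * b + 4 * a * b ^ 2) * doublingDen a b
      = 15 * a ^ 7 := by
  constructor <;> (simp only [doublingNum, doublingDen]; ring)

lemma dvd_fifteen_of_dvd_doubling {a b g : ℤ} (hab : IsCoprime a b)
    (hn : g ∣ doublingNum a b) (hd : g ∣ doublingDen a b) : g ∣ 15 := by
  obtain ⟨hb, ha⟩ := doubling_bezout a b
  have hb7 : g ∣ 15 * b ^ 7 := hb ▸ hn.linear_comb hd _ _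
  have ha7 : g ∣ 15 * a ^ 7 := ha ▸ hn.linear_comb hd _ _
  obtain ⟨u, v, huv⟩ := hab.pow (m := 7) (n := 7)
  have h15 : 15 = u * (15 * a ^ 7) + v * (15 * b ^ 7) := by linear_combination -15 * huv
  exact h15 ▸ ha7.linear_comb hb7 u v

lemma fifteen_mul_pow_seven_le (a b : ℤ) :
    15 * max |a| |b| ^ 7 ≤ 144 * max |a| |b| ^ 3 * max |doublingNum a b| |doublingDen a b| := by
  obtain ⟨hb, ha⟩ := doubling_bezout a b
  have hM : 0 ≤ max |a| |b| ^ 3 := pow_nonneg (le_max_of_le_left (abs_nonneg a)) 3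
  have bezout_bound : ∀ u v : ℤ, |u| + |v| ≤ 144 * max |a| |b| ^ 3 →
      15 * max |a| |b| ^ 7 = |u * doublingNum a b + v * doublingDen a b| →
      15 * max |a| |b| ^ 7 ≤ 144 * max |a| |b| ^ 3 * max |doublingNum a b| |doublingDen a b| :=
    fun u v huv heq => heq ▸ (abs_mul_add_mul_le _ _ _ _).trans
      (mul_le_mul_of_nonneg_right huv (le_max_of_le_left (abs_nonneg _)))
  rcases max_choice |a| |b| with hMa | hMb
  · refine bezout_bound _ _ ?_ (by rw [ha, abs_mul, abs_pow, hMa]; norm_num)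
    have h₁ := abs_cubic_form_le 15 4 4 0 a b
    have h₂ := abs_cubic_form_le (-1) 4 4 0 a b
    norm_num at h₁ h₂ ⊢
    linarith
  · refine bezout_bound _ _ ?_ (by rw [hb, abs_mul, abs_pow, hMb]; norm_num)
    have h₁ := abs_cubic_form_le 0 48 40 7 a b
    have h₂ := abs_cubic_form_le (-12) 5 10 22 a b
    norm_num at h₁ h₂ ⊢
    linarith

lemma max_abs_pow_four_le {a b g n d : ℤ} (hab : IsCoprime a b)
    (hn : doublingNum a b = g * n) (hd : doublingDen a b = g * d) :
    max |a| |b| ^ 4 ≤ 144 * max |n| |d| := by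
  have hg : |g| ≤ 15 := Int.le_of_dvd (by norm_num)
    ((abs_dvd g 15).2 (dvd_fifteen_of_dvd_doubling hab ⟨n, hn⟩ ⟨d, hd⟩))
  have hM : 0 < max |a| |b| := by
    by_contra! h
    obtain rfl : a = 0 := abs_nonpos_iff.1 ((le_max_left _ _).trans h)
    obtain rfl : b = 0 := abs_nonpos_iff.1 ((le_max_right _ _).trans h)
    exact not_isCoprime_zero_zero hab
  have hbound := fifteen_mul_pow_seven_le a b
  rw [hn, hd, abs_mul, abs_mul, ← mul_max_of_nonneg _ _ (abs_nonneg g)] at hbound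
  have hN : 0 ≤ max |n| |d| := le_max_of_le_left (abs_nonneg n)
  have : max |a| |b| ^ 3 * (15 * max |a| |b| ^ 4) ≤ max |a| |b| ^ 3 * (15 * (144 * max |n| |d|)) :=
    calc _ = 15 * max |a| |b| ^ 7 := by ring
      _ ≤ 144 * max |a| |b| ^ 3 * (|g| * max |n| |d|) := hbound
      _ ≤ 144 * max |a| |b| ^ 3 * (15 * max |n| |d|) := by gcongr
      _ = _ := by ring
  linarith [le_of_mul_le_mul_left this (by positivity)]

lemma mulHeight₁_pow_four_le {x x' : ℚ} (hx : x ≠ -1)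
    (h : X115.Ψ₂Sq.eval x * x' = (X115.Φ 2).eval x) : mulHeight₁ x ^ 4 ≤ 144 * mulHeight₁ x' := by
  have hb : (x.den : ℚ) ≠ 0 := Nat.cast_ne_zero.2 x.den_nz
  have hnum : (doublingNum x.num x.den : ℚ) = x.den ^ 4 * (X115.Φ 2).eval x := by
    rw [eval_Φ_two, doublingNum]; push_cast; rw [← Rat.mul_den_eq_num]; ring
  have hden : (doublingDen x.num x.den : ℚ) = x.den ^ 4 * X115.Ψ₂Sq.eval x := by
    rw [eval_Ψ₂Sq, doublingDen]; push_cast; rw [← Rat.mul_den_eq_num]; ring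
  have hden0 : (doublingDen x.num x.den : ℚ) ≠ 0 := by
    rw [hden]; exact mul_ne_zero (pow_ne_zero _ hb) (eval_Ψ₂Sq_ne_zero hx)
  have hx' : (doublingNum x.num x.den : ℚ) / doublingDen x.num x.den = x' := by
    rw [hnum, hden, ← h]; field_simp [eval_Ψ₂Sq_ne_zero hx]
  obtain ⟨g, hn, hd⟩ :=
    Rat.exists_eq_mul_div_num_and_eq_mul_div_den _ (by exact_mod_cast hden0 : doublingDen x.num x.den ≠ 0)
  rw [hx'] at hn hd
  have hab : IsCoprime x.num x.den := Int.isCoprime_iff_gcd_eq_one.2 x.reduced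
  rw [Rat.mulHeight₁_eq_max_abs, Rat.mulHeight₁_eq_max_abs]
  exact_mod_cast max_abs_pow_four_le hab hn hd

lemma naiveHeight_lt_two_nsmul {P : X115.Point} (hP : 6 ≤ P.naiveHeight) :
    P.naiveHeight < (2 • P).naiveHeight := by
  rcases P with _ | ⟨x, y, h⟩
  · norm_num [Point.naiveHeight] at hP
  have hH : 6 ≤ mulHeight₁ x := hP
  have hx : x ≠ -1 := by
    rintro rfl
    rw [mulHeight₁_neg, mulHeight₁_one] at hH
    norm_num at hH
  obtain ⟨x', y', h', hP2, hx'⟩ := exists_two_nsmul_some_eq h hx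
  rw [hP2]
  show mulHeight₁ x < mulHeight₁ x'
  have := mulHeight₁_pow_four_le hx hx'
  nlinarith [pow_le_pow_left₀ (by norm_num) hH 3]

lemma strictMono_naiveHeight_two_pow_nsmul {P : X115.Point} (hP : 6 ≤ P.naiveHeight) :
    StrictMono fun k : ℕ ↦ (2 ^ k • P).naiveHeight := by
  have step : ∀ k : ℕ, 6 ≤ (2 ^ k • P).naiveHeight →
      (2 ^ k • P).naiveHeight < (2 ^ (k + 1) • P).naiveHeight := fun k hk ↦ by
    rw [pow_succ', mul_nsmul']
    exact naiveHeight_lt_two_nsmul hk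
  have big : ∀ k : ℕ, 6 ≤ (2 ^ k • P).naiveHeight := fun k ↦ by
    induction k with
    | zero => simpa using hP
    | succ k ih => exact ih.trans (step k ih).le
  exact strictMono_nat_of_lt_succ fun k ↦ step k (big k)

lemma naiveHeight_lt_six_of_isOfFinAddOrder {P : X115.Point} (hP : IsOfFinAddOrder P) :
    P.naiveHeight < 6 := by
  by_contra! h
  have hinj : Function.Injective fun k : ℕ ↦ 2 ^ k • P :=
    .of_comp (f := Point.naiveHeight) (strictMono_naiveHeight_two_pow_nsmul h).injective
  refine Set.infinite_range_of_injective hinj (hP.finite_multiples.subset ?_)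
  rintro _ ⟨k, rfl⟩
  exact ⟨2 ^ k, rfl⟩

lemma eq_zero_or_eq_neg_one_of_isSquare {x : ℚ} (hx : mulHeight₁ x < 6)
    (hsq : IsSquare (X115.Ψ₂Sq.eval x)) : x = 0 ∨ x = -1 := by
  have box : ∀ a ∈ Finset.Icc (-5 : ℤ) 5, ∀ b ∈ Finset.Icc (1 : ℕ) 5,
      IsSquare (4 * ((a : ℚ) / b) ^ 3 + 5 * ((a : ℚ) / b) ^ 2 + 2 * ((a : ℚ) / b) + 1) →
      (a : ℚ) / b = 0 ∨ (a : ℚ) / b = -1 := by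
    decide +kernel
  rw [Rat.mulHeight₁_eq_max] at hx
  obtain ⟨hnum, hden⟩ := max_lt_iff.1 (by exact_mod_cast hx : max x.num.natAbs x.den < 6)
  rw [eval_Ψ₂Sq] at hsq
  rw [← Rat.num_div_den x] at hsq ⊢
  exact box _ (Finset.mem_Icc.2 (by omega)) _ (Finset.mem_Icc.2 ⟨x.pos, by omega⟩) hsq

lemma x_eq_zero_or_neg_one_of_isOfFinAddOrder {x y : ℚ} {h : X115.Nonsingular x y}
    (hP : IsOfFinAddOrder (Point.some x y h)) : x = 0 ∨ x = -1 :=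
  eq_zero_or_eq_neg_one_of_isSquare (naiveHeight_lt_six_of_isOfFinAddOrder hP)
    ⟨_, (eval_Ψ₂Sq_eq_sq h.1).trans (sq _)⟩

lemma nonsingular_zero_zero : X115.Nonsingular 0 0 := by
  rw [nonsingular_iff, equation_iff_eq]; norm_num [X115]

lemma nonsingular_zero_neg_one : X115.Nonsingular 0 (-1) := by
  rw [nonsingular_iff, equation_iff_eq]; norm_num [X115]

lemma nonsingular_neg_one_zero : X115.Nonsingular (-1) 0 := by
  rw [nonsingular_iff, equation_iff_eq]; norm_num [X115]

def P : X115.Point := .some 0 0 nonsingular_zero_zero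

lemma two_nsmul_P : 2 • P = .some (-1) 0 nonsingular_neg_one_zero := by
  obtain ⟨x', y', h', hP, hx'⟩ := exists_two_nsmul_some_eq nonsingular_zero_zero (by norm_num)
  rw [eval_Ψ₂Sq, eval_Φ_two] at hx'
  obtain rfl : x' = -1 := by linarith
  obtain rfl : y' = 0 := by
    have := (equation_iff_eq _ _).1 h'.1
    exact pow_eq_zero_iff two_ne_zero |>.1 (by linear_combination this)
  exact hP

lemma four_nsmul_P : 4 • P = 0 := by
  rw [show 4 = 2 * 2 by rfl, mul_nsmul, two_nsmul_P, two_nsmul]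
  exact Point.add_self_of_Y_eq (by rw [negY_eq]; norm_num)

lemma neg_P : -P = .some 0 (-1) nonsingular_zero_neg_one := by
  simp only [P, Point.neg_some, negY_eq]; norm_num

lemma addOrderOf_P : addOrderOf P = 4 :=
  addOrderOf_eq_prime_pow (p := 2) (n := 1)
    (by rw [pow_one, two_nsmul_P]; exact Point.some_ne_zero _) four_nsmul_P

lemma some_mem_zmultiples_P {x y : ℚ} (h : X115.Nonsingular x y) (hx : x = 0 ∨ x = -1) :
    Point.some x y h ∈ AddSubgroup.zmultiples P := by
  have hxy := (equation_iff_eq x y).1 h.1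
  rcases hx with rfl | rfl
  · obtain rfl | rfl : y = 0 ∨ y = -1 := by
      have : y * (y + 1) = 0 := by linear_combination hxy
      rcases mul_eq_zero.1 this with hy | hy
      · exact .inl hy
      · exact .inr (by linarith)
    · exact AddSubgroup.mem_zmultiples P
    · rw [← neg_P]; exact neg_mem (AddSubgroup.mem_zmultiples P)
  · obtain rfl : y = 0 := pow_eq_zero_iff two_ne_zero |>.1 (by linear_combination hxy)
    rw [← two_nsmul_P]; exact nsmul_mem (AddSubgroup.mem_zmultiples P) 2

lemma torsion_addEquiv_zmod_four : Nonempty (AddCommGroup.torsion X115.Point ≃+ ZMod 4) := by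
  let g : AddCommGroup.torsion X115.Point :=
    ⟨P, addOrderOf_pos_iff.1 (by rw [addOrderOf_P]; norm_num)⟩
  have hg : ∀ Q, Q ∈ AddSubgroup.zmultiples g := by
    rintro ⟨_ | ⟨x, y, h⟩, hQ⟩
    · exact zero_mem _
    obtain ⟨k, hk⟩ := AddSubgroup.mem_zmultiples_iff.1
      (some_mem_zmultiples_P h (x_eq_zero_or_neg_one_of_isOfFinAddOrder hQ))
    exact AddSubgroup.mem_zmultiples_iff.2 ⟨k, Subtype.ext hk⟩
  have hcard : Nat.card (AddCommGroup.torsion X115.Point) = 4 := by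
    rw [← Nat.card_congr (Equiv.subtypeUnivEquiv hg), Nat.card_zmultiples,
      ← AddSubgroup.addOrderOf_coe, addOrderOf_P]
  exact ⟨(zmodAddEquivOfGenerator hg hcard).symm⟩

end X115

/-- Every rational torsion point of X₁(15) has x-coordinate 0 or −1, and the
rational torsion subgroup is cyclic of order 4. -/
theorem stmt_14 :
    (∀ (x y : ℚ) (h : X115.Nonsingular x y),
      IsOfFinAddOrder (WeierstrassCurve.Affine.Point.some x y h) → x = 0 ∨ x = -1) ∧
    Nonempty (AddCommGroup.torsion X115.Point ≃+ ZMod 4) :=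
  ⟨fun _ _ _ ↦ X115.x_eq_zero_or_neg_one_of_isOfFinAddOrder, X115.torsion_addEquiv_zmod_four⟩
end

section
/- Let K = ℚ(√13). On the elliptic curve over K with equation y² + (134025 − 37172√13)xy + (47915630355840 − 13289404780320√13)y = x³ + (3775925760√13 − 13614293940)x², the point (3993089880 − 1107483870√13, 176222937989280√13 − 635380838833260) is a torsion point of order 12. -/
open WeierstrassCurve WeierstrassCurve.Affine

/-!
Doubling `P` gives the point `P₂ = 2P` with `y = 0`; doubling again gives `P₄ = 4P`, and
`P₆ = P₂ + P₄ = 6P` satisfies `y = -y - a₁x - a₃`, so it is a point of order two. Hence `12P = 0`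
while `4P ≠ 0` and `6P ≠ 0`, and `P` has order `12`. Every identity is a polynomial identity modulo
`s² = 13`; every inequality reduces to `c + d s ≠ 0` for integers with `c² ≠ 13 d²`, which needs
characteristic zero. The `linear_combination` coefficients are the quotients of the differences by
`s² - 13`, and `c + d s` is the remainder.
-/

theorem intCast_add_intCast_mul_ne_zero {R : Type*} [CommRing R] [CharZero R] {s : R} {n : ℤ}
    (hs : s ^ 2 = n) {c d : ℤ} (hcd : c ^ 2 ≠ n * d ^ 2) : (c : R) + d * s ≠ 0 := by
  intro h
  apply hcd
  exact_mod_cast (show (c : R) ^ 2 = n * d ^ 2 by linear_combination (c - d * s) * h + d ^ 2 * hs)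

theorem addOrderOf_eq_twelve {G : Type*} [AddMonoid G] {x : G} (h12 : 12 • x = 0)
    (h4 : 4 • x ≠ 0) (h6 : 6 • x ≠ 0) : addOrderOf x = 12 := by
  refine addOrderOf_eq_of_nsmul_and_div_prime_nsmul (by norm_num) h12 fun p hp hdvd ↦ ?_
  have hp12 : p ≤ 12 := Nat.le_of_dvd (by norm_num) hdvd
  interval_cases p <;> first | exact h6 | exact h4 | omega | norm_num at hp

namespace Sqrt13

variable {K : Type*} [Field K] {s : K}

def curve (s : K) : Affine K :=
  ⟨134025 - 37172 * s, 3775925760 * s - 13614293940, 47915630355840 - 13289404780320 * s, 0, 0⟩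

theorem equation_P (hs : s ^ 2 = 13) :
    (curve s).Equation (3993089880 - 1107483870 * s) (176222937989280 * s - 635380838833260) := by
  rw [equation_iff]
  simp only [curve]
  linear_combination (3981739747718651911793998200 * s - 14356366825952648346437156400) * hs

theorem equation_P₂ : (curve s).Equation (13614293940 - 3775925760 * s) 0 := by
  rw [equation_iff]
  simp only [curve]
  ring

theorem equation_P₄ (hs : s ^ 2 = 13) :
    (curve s).Equation (4849953936 - 1345135200 * s) (130133861899776 * s - 469204311753792) := by
  rw [equation_iff]
  simp only [curve]
  linear_combination (2108625826276189263591014400 * s - 7602758537406422500570484736) * hs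

theorem equation_P₆ (hs : s ^ 2 = 13) :
    (curve s).Equation (3758202240 - 1042337760 * s) (146344308364800 * s - 527651907681600) := by
  rw [equation_iff]
  simp only [curve]
  linear_combination (2700268357861632541741056000 * s - 9735956021783061086095872000) * hs

theorem Y_eq_negY_P₆ (hs : s ^ 2 = 13) :
    146344308364800 * s - 527651907681600 =
      (curve s).negY (3758202240 - 1042337760 * s) (146344308364800 * s - 527651907681600) := by
  simp only [curve, negY]
  linear_combination 38745779214720 * hs

variable [CharZero K]

theorem Y_ne_negY_P (hs : s ^ 2 = 13) :
    176222937989280 * s - 635380838833260 ≠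
      (curve s).negY (3993089880 - 1107483870 * s) (176222937989280 * s - 635380838833260) := by
  intro h
  apply intCast_add_intCast_mul_ne_zero (R := K) (n := 13) (c := -152496100740360)
    (d := 42294808502130) (by exact_mod_cast hs) (by norm_num)
  simp only [curve, negY] at h
  push_cast
  linear_combination h - 41167390415640 * hs

theorem Y_ne_negY_P₂ (hs : s ^ 2 = 13) :
    0 ≠ (curve s).negY (13614293940 - 3775925760 * s) 0 := by
  intro h
  apply intCast_add_intCast_mul_ne_zero (R := K) (n := 13) (c := 3697234636223700)
    (d := -1025428389102000) (by exact_mod_cast hs) (by norm_num)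
  simp only [curve, negY] at h
  push_cast
  linear_combination h - 140358712350720 * hs

theorem Y_ne_negY_P₄ (hs : s ^ 2 = 13) :
    130133861899776 * s - 469204311753792 ≠
      (curve s).negY (4849953936 - 1345135200 * s) (130133861899776 * s - 469204311753792) := by
  intro h
  apply intCast_add_intCast_mul_ne_zero (R := K) (n := 13) (c := 409539836627856)
    (d := -113585913869760) (by exact_mod_cast hs) (by norm_num)
  simp only [curve, negY] at h
  push_cast
  linear_combination h - 50001365654400 * hs

theorem X_ne_P₂_P₄ (hs : s ^ 2 = 13) :
    (13614293940 - 3775925760 * s : K) ≠ 4849953936 - 1345135200 * s := by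
  intro h
  apply intCast_add_intCast_mul_ne_zero (R := K) (n := 13) (c := 8764340004)
    (d := -2430790560) (by exact_mod_cast hs) (by norm_num)
  push_cast
  linear_combination h

theorem nonsingular_P (hs : s ^ 2 = 13) :
    (curve s).Nonsingular (3993089880 - 1107483870 * s) (176222937989280 * s - 635380838833260) :=
  (nonsingular_iff _ _).mpr ⟨equation_P hs, Or.inr (Y_ne_negY_P hs)⟩

theorem nonsingular_P₂ (hs : s ^ 2 = 13) :
    (curve s).Nonsingular (13614293940 - 3775925760 * s) 0 :=
  (nonsingular_iff _ _).mpr ⟨equation_P₂, Or.inr (Y_ne_negY_P₂ hs)⟩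

theorem nonsingular_P₄ (hs : s ^ 2 = 13) :
    (curve s).Nonsingular (4849953936 - 1345135200 * s) (130133861899776 * s - 469204311753792) :=
  (nonsingular_iff _ _).mpr ⟨equation_P₄ hs, Or.inr (Y_ne_negY_P₄ hs)⟩

theorem nonsingular_P₆ (hs : s ^ 2 = 13) :
    (curve s).Nonsingular (3758202240 - 1042337760 * s)
      (146344308364800 * s - 527651907681600) := by
  refine (nonsingular_iff _ _).mpr ⟨equation_P₆ hs, Or.inl fun h ↦ ?_⟩
  apply intCast_add_intCast_mul_ne_zero (R := K) (n := 13) (c := -21520809658797883200)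
    (d := 5968798670330496000) (by exact_mod_cast hs) (by norm_num)
  simp only [curve] at h
  push_cast
  linear_combination h + 827734651092403200 * hs

def P (hs : s ^ 2 = 13) : (curve s).Point := .some _ _ (nonsingular_P hs)

def P₂ (hs : s ^ 2 = 13) : (curve s).Point := .some _ _ (nonsingular_P₂ hs)

def P₄ (hs : s ^ 2 = 13) : (curve s).Point := .some _ _ (nonsingular_P₄ hs)

def P₆ (hs : s ^ 2 = 13) : (curve s).Point := .some _ _ (nonsingular_P₆ hs)

variable [DecidableEq K]

theorem P_add_P (hs : s ^ 2 = 13) : P hs + P hs = P₂ hs := by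
  have hL : (curve s).slope (3993089880 - 1107483870 * s) (3993089880 - 1107483870 * s)
      (176222937989280 * s - 635380838833260) (176222937989280 * s - 635380838833260) =
        44132 * s - 159120 := by
    rw [slope_of_Y_ne rfl (Y_ne_negY_P hs), div_eq_iff (sub_ne_zero.mpr (Y_ne_negY_P hs))]
    simp only [curve, negY]
    linear_combination (6550567544953700100 - 1816799273823024480 * s) * hs
  rw [P, P₂, Point.add_self_of_Y_ne (Y_ne_negY_P hs), Point.some.injEq, hL]
  simp only [curve, addX, addY, negAddY, negY]
  constructor
  · linear_combination 307158720 * hs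
  · linear_combination (-14886886782840 - 2137824691200 * s) * hs

theorem P₂_add_P₂ (hs : s ^ 2 = 13) : P₂ hs + P₂ hs = P₄ hs := by
  have hL : (curve s).slope (13614293940 - 3775925760 * s) (13614293940 - 3775925760 * s) 0 0 =
      50132 - 13904 * s := by
    rw [slope_of_Y_ne rfl (Y_ne_negY_P₂ hs), div_eq_iff (sub_ne_zero.mpr (Y_ne_negY_P₂ hs))]
    simp only [curve, negY]
    linear_combination (1951547536524410880 * s - 7036403944608925440) * hs
  rw [P₂, P₄, Point.add_self_of_Y_ne (Y_ne_negY_P₂ hs), Point.some.injEq, hL]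
  simp only [curve, addX, addY, negAddY, negY]
  constructor
  · linear_combination 710160704 * hs
  · linear_combination (36272168117504 * s - 146984718474688) * hs

theorem P₂_add_P₄ (hs : s ^ 2 = 13) : P₂ hs + P₄ hs = P₆ hs := by
  have hL : (curve s).slope (13614293940 - 3775925760 * s) (4849953936 - 1345135200 * s) 0
      (130133861899776 * s - 469204311753792) = 26768 - 7424 * s := by
    rw [slope_of_X_ne (X_ne_P₂_P₄ hs), div_eq_iff (sub_ne_zero.mpr (X_ne_P₂_P₄ hs))]
    linear_combination -18046189117440 * hs
  rw [P₂, P₄, P₆, Point.add_of_X_ne (X_ne_P₂_P₄ hs), Point.some.injEq, hL]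
  simp only [curve, addX, addY, negAddY, negY]
  constructor
  · linear_combination 331080704 * hs
  · linear_combination (14764875075584 * s - 71687081540992) * hs

theorem P₆_add_P₆ (hs : s ^ 2 = 13) : P₆ hs + P₆ hs = 0 :=
  Point.add_self_of_Y_eq (Y_eq_negY_P₆ hs)

theorem addOrderOf_P (hs : s ^ 2 = 13) : addOrderOf (P hs) = 12 := by
  have h2 : 2 • P hs = P₂ hs := by rw [two_nsmul, P_add_P]
  have h4 : 4 • P hs = P₄ hs := by rw [show 4 = 2 + 2 from rfl, add_nsmul, h2, P₂_add_P₂]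
  have h6 : 6 • P hs = P₆ hs := by
    rw [show 6 = 2 + 4 from rfl, add_nsmul, h2, h4, P₂_add_P₄]
  refine addOrderOf_eq_twelve ?_ (h4 ▸ Point.some_ne_zero _) (h6 ▸ Point.some_ne_zero _)
  rw [show 12 = 6 + 6 from rfl, add_nsmul, h6, P₆_add_P₆]

end Sqrt13

open Classical in
theorem stmt_16_general {K : Type*} [Field K] [Algebra ℚ K] (s : K) (hs : s ^ 2 = 13) :
    ∃ h : WeierstrassCurve.Affine.Nonsingular (⟨134025 - 37172 * s, 3775925760 * s - 13614293940, 47915630355840 - 13289404780320 * s, 0, 0⟩ : WeierstrassCurve.Affine K) (3993089880 - 1107483870 * s) (176222937989280 * s - 635380838833260),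
      addOrderOf (WeierstrassCurve.Affine.Point.some _ _ h) = 12 := by
  have : CharZero K := charZero_of_injective_algebraMap (algebraMap ℚ K).injective
  exact ⟨Sqrt13.nonsingular_P hs, Sqrt13.addOrderOf_P hs⟩

open Classical in
/-- K = ℚ(√(13)); the given point is a torsion point of order 12. -/
theorem stmt_16 {K : Type*} [Field K] [Algebra ℚ K] (s : K) (hs : s ^ 2 = 13)
    (hK : ∀ x : K, ∃ a b : ℚ, x = algebraMap ℚ K a + algebraMap ℚ K b * s) :
    ∃ h : WeierstrassCurve.Affine.Nonsingular (⟨134025 - 37172 * s, 3775925760 * s - 13614293940, 47915630355840 - 13289404780320 * s, 0, 0⟩ : WeierstrassCurve.Affine K) (3993089880 - 1107483870 * s) (176222937989280 * s - 635380838833260),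
      addOrderOf (WeierstrassCurve.Affine.Point.some _ _ h) = 12 :=
  stmt_16_general s hs
end
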